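/- arXiv:1605.04538 — 2 statements merged into one kernel-verified Lean document; each statement's English description precedes it below -/
import Mathlib

section
/- Let G=(V,E,ω) be a finite weighted undirected graph, let H be a weighted edge set on V, let ε>0 be real, let β≥1 be an integer, and let p,k be integers with 0≤p≤k+1. Suppose that for every pair x,y∈V with d_G(x,y)≤2^p one has d_{G∪H}^{(β)}(x,y) ≤ (1+ε)·d_G(x,y). Then for every pair u,v∈V with d_G(u,v)≤2^{k+1} (and finite), one has d_{G∪H}^{(2^{k+1-p}·(β+1))}(u,v) ≤ (1+ε)·d_G(u,v). -/
open scoped ENNReal Classical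

/-- `hopDist w t u v` is the minimum total weight of a `u`–`v` path with at most `t` edges,
in the weighted graph whose (symmetric) weight function is `w` (`⊤` meaning "no edge"). -/
noncomputable def hopDist {V : Type*} (w : V → V → ℝ≥0∞) : ℕ → V → V → ℝ≥0∞
  | 0, u, v => if u = v then 0 else ⊤
  | t + 1, u, v => min (hopDist w t u v) (⨅ x : V, w u x + hopDist w t x v)

/-- Shortest-path distance. -/
noncomputable def gDist {V : Type*} (w : V → V → ℝ≥0∞) (u v : V) : ℝ≥0∞ :=
  ⨅ t : ℕ, hopDist w t u v

/-- Union of two weighted edge sets, keeping the smaller weight on parallel edges. -/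
noncomputable def unionW {V : Type*} (w₁ w₂ : V → V → ℝ≥0∞) (u v : V) : ℝ≥0∞ :=
  min (w₁ u v) (w₂ u v)

/-- Number of (undirected) edges of a weighted edge set. -/
noncomputable def edgeCount {V : Type*} (w : V → V → ℝ≥0∞) : ℕ :=
  Set.ncard {p : Sym2 V | ∃ u v : V, p = s(u, v) ∧ u ≠ v ∧ w u v ≠ ⊤}

/-- `H` is a `(β, ε)`-hopset for `G`. -/
def IsHopset {V : Type*} (wG wH : V → V → ℝ≥0∞) (β : ℕ) (ε : ℝ) : Prop :=
  ∀ u v : V, gDist wG u v ≤ hopDist (unionW wG wH) β u v ∧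
    hopDist (unionW wG wH) β u v ≤ ENNReal.ofReal (1 + ε) * gDist wG u v

/-!
Induction on `j`: pairs at distance at most `2 ^ j * r` are handled with `2 ^ j * (β + 1) - 1`
hops. For the step let `M = 2 ^ j * r` and `M < d(u, v) ≤ 2M`. On a shortest `u`–`v` walk take the
first edge `(x, y)` at which the weight of the prefix exceeds `M`. Then `d(u, x) ≤ M` and
`d(y, v) ≤ d(u, v) - M ≤ M`, so both halves are handled by induction, and the edge `(x, y)` costs
one more hop: `2 (2 ^ j (β + 1) - 1) + 1 = 2 ^ (j + 1) (β + 1) - 1`.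
-/

section Walks

variable {V : Type*} (w : V → V → ℝ≥0∞)

/-- A walk from `u` is encoded by `u` and the list of the vertices visited after it. -/
noncomputable def walkWeight : V → List V → ℝ≥0∞
  | _, [] => 0
  | u, x :: l => w u x + walkWeight x l

def walkEnd : V → List V → V
  | u, [] => u
  | _, x :: l => walkEnd x l

variable {w}

theorem walkEnd_append (u : V) (a b : List V) :
    walkEnd u (a ++ b) = walkEnd (walkEnd u a) b := by
  induction a generalizing u with
  | nil => rfl
  | cons x a ih => exact ih x

theorem walkWeight_append (u : V) (a b : List V) :
    walkWeight w u (a ++ b) = walkWeight w u a + walkWeight w (walkEnd u a) b := by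
  induction a generalizing u with
  | nil => simp [walkWeight, walkEnd]
  | cons x a ih => simp [walkWeight, walkEnd, ih, add_assoc]

theorem exists_nodup_walk (u : V) (l : List V) :
    ∃ l' ⊆ l, (u :: l').Nodup ∧ walkEnd u l' = walkEnd u l ∧
      walkWeight w u l' ≤ walkWeight w u l := by
  induction h : l.length using Nat.strong_induction_on generalizing l u with
  | _ n ih =>
    by_cases hu : u ∈ l
    · obtain ⟨a, b, rfl⟩ := List.append_of_mem hu
      have hsplit : a ++ u :: b = (a ++ [u]) ++ b := by simp
      have hloop : walkEnd u (a ++ [u]) = u := by rw [walkEnd_append]; rfl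
      obtain ⟨l', hsub, hnd, hend, hle⟩ := ih b.length (by simp [← h]; omega) u b rfl
      refine ⟨l', fun z hz => by simp [hsub hz], hnd, ?_, ?_⟩
      · rw [hend, hsplit, walkEnd_append, hloop]
      · rw [hsplit, walkWeight_append, hloop]
        exact hle.trans le_add_self
    · cases l with
      | nil => exact ⟨[], List.Subset.refl _, by simp, rfl, le_rfl⟩
      | cons x l =>
        obtain ⟨l', hsub, hnd, hend, hle⟩ := ih l.length (by simp [← h]) x l rfl
        refine ⟨x :: l', List.cons_subset_cons x hsub, ?_, hend, add_le_add_right hle _⟩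
        exact List.nodup_cons.mpr ⟨fun hmem => hu (List.cons_subset_cons x hsub hmem), hnd⟩

theorem exists_crossing_edge (u : V) (l : List V) {M : ℝ≥0∞} (hM : M < walkWeight w u l) :
    ∃ a y b, l = a ++ y :: b ∧ walkWeight w u a ≤ M ∧ M < walkWeight w u (a ++ [y]) := by
  induction l using List.reverseRecOn with
  | nil => simp [walkWeight] at hM
  | append_singleton l z ih =>
    by_cases hl : M < walkWeight w u l
    · obtain ⟨a, y, b, rfl, ha, hay⟩ := ih hl
      exact ⟨a, y, b ++ [z], by simp, ha, hay⟩
    · exact ⟨l, z, [], rfl, not_lt.mp hl, hM⟩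

end Walks

section HopDist

variable {V : Type*} {w : V → V → ℝ≥0∞}

theorem hopDist_antitone (u v : V) : Antitone fun t => hopDist w t u v :=
  antitone_nat_of_succ_le fun _ => min_le_left _ _

theorem hopDist_self (t : ℕ) (u : V) : hopDist w t u u = 0 :=
  nonpos_iff_eq_zero.mp ((hopDist_antitone u u (Nat.zero_le t)).trans (by simp [hopDist]))

theorem hopDist_one_le (u v : V) : hopDist w 1 u v ≤ w u v :=
  calc hopDist w 1 u v ≤ w u v + hopDist w 0 v v := (min_le_right _ _).trans (iInf_le _ v)
    _ = w u v := by simp [hopDist]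

theorem hopDist_add_le (s t : ℕ) (u x v : V) :
    hopDist w (s + t) u v ≤ hopDist w s u x + hopDist w t x v := by
  induction s generalizing u with
  | zero => by_cases h : u = x <;> simp [h, hopDist]
  | succ s ih =>
    rw [Nat.add_right_comm, hopDist, hopDist, ← min_add_add_right]
    refine min_le_min (ih u) ?_
    rw [ENNReal.iInf_add]
    refine iInf_mono fun z => ?_
    rw [add_assoc]
    exact add_le_add_right (ih z) _

theorem hopDist_le_walkWeight (u : V) (l : List V) {t : ℕ} (ht : l.length ≤ t) :
    hopDist w t u (walkEnd u l) ≤ walkWeight w u l := by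
  induction l generalizing u t with
  | nil => simp [hopDist_self, walkEnd]
  | cons x l ih =>
    obtain ⟨s, rfl⟩ : ∃ s, t = s + 1 := Nat.exists_eq_add_one.mpr (by simp at ht; omega)
    calc hopDist w (s + 1) u (walkEnd u (x :: l))
        ≤ w u x + hopDist w s x (walkEnd x l) := (min_le_right _ _).trans (iInf_le _ x)
      _ ≤ walkWeight w u (x :: l) := add_le_add_right (ih x (by simpa using ht)) _

theorem gDist_le_walkWeight (u : V) (l : List V) : gDist w u (walkEnd u l) ≤ walkWeight w u l :=
  (iInf_le _ l.length).trans (hopDist_le_walkWeight u l le_rfl)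

theorem exists_walk_le_hopDist [Finite V] (t : ℕ) (u v : V) (h : hopDist w t u v ≠ ⊤) :
    ∃ l, walkEnd u l = v ∧ walkWeight w u l ≤ hopDist w t u v := by
  induction t generalizing u with
  | zero =>
    by_cases huv : u = v
    · exact ⟨[], huv, by simp [walkWeight]⟩
    · simp [hopDist, huv] at h
  | succ t ih =>
    have : Nonempty V := ⟨u⟩
    rcases min_choice (hopDist w t u v) (⨅ x, w u x + hopDist w t x v) with hmin | hmin <;>
      rw [hopDist, hmin] at h ⊢
    · exact ih u h
    · obtain ⟨x, hx⟩ := exists_eq_ciInf_of_finite (f := fun x => w u x + hopDist w t x v)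
      rw [← hx] at h ⊢
      obtain ⟨l, hend, hle⟩ := ih x (ENNReal.add_ne_top.mp h).2
      exact ⟨x :: l, hend, add_le_add_right hle _⟩

theorem gDist_eq_hopDist_card [Fintype V] (u v : V) :
    gDist w u v = hopDist w (Fintype.card V) u v := by
  refine le_antisymm (iInf_le _ _) (le_iInf fun t => ?_)
  by_cases h : hopDist w t u v = ⊤
  · simp [h]
  obtain ⟨l, rfl, hle⟩ := exists_walk_le_hopDist t u v h
  obtain ⟨l', -, hnd, hend, hle'⟩ := exists_nodup_walk (w := w) u l
  have hlen : l'.length < Fintype.card V := by simpa using hnd.length_le_card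
  calc hopDist w (Fintype.card V) u (walkEnd u l) ≤ walkWeight w u l' :=
        hend ▸ hopDist_le_walkWeight u l' hlen.le
    _ ≤ hopDist w t u (walkEnd u l) := hle'.trans hle

theorem exists_walk_eq_gDist [Fintype V] (u v : V) (h : gDist w u v ≠ ⊤) :
    ∃ l, walkEnd u l = v ∧ walkWeight w u l = gDist w u v := by
  rw [gDist_eq_hopDist_card] at h ⊢
  obtain ⟨l, rfl, hle⟩ := exists_walk_le_hopDist _ u v h
  exact ⟨l, rfl, le_antisymm hle (gDist_eq_hopDist_card (w := w) u _ ▸ gDist_le_walkWeight u l)⟩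

end HopDist

theorem exists_edge_split_of_gDist_le_add {V : Type*} [Fintype V] {g : V → V → ℝ≥0∞}
    {u v : V} {M : ℝ≥0∞} (hM : M ≠ ⊤) (hlt : M < gDist g u v) (hle : gDist g u v ≤ M + M) :
    ∃ x y, gDist g u x ≤ M ∧ gDist g y v ≤ M ∧
      gDist g u x + g x y + gDist g y v ≤ gDist g u v := by
  obtain ⟨l, rfl, hl⟩ := exists_walk_eq_gDist u v (ne_top_of_le_ne_top (by simpa) hle)
  obtain ⟨a, y, b, rfl, ha, hay⟩ := exists_crossing_edge u l (hl ▸ hlt)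
  have hend : walkEnd u (a ++ y :: b) = walkEnd y b := walkEnd_append u a (y :: b)
  have hsplit : gDist g u (walkEnd u (a ++ y :: b)) =
      walkWeight g u a + g (walkEnd u a) y + walkWeight g y b := by
    rw [← hl, walkWeight_append, walkWeight, add_assoc]
  have hay : M < walkWeight g u a + g (walkEnd u a) y := by
    rwa [walkWeight_append, walkWeight, walkWeight, add_zero] at hay
  have hb : walkWeight g y b ≤ M := by
    refine (ENNReal.add_le_add_iff_right hM).mp (le_trans ?_ (hsplit ▸ hle))
    rw [add_comm _ M]
    exact add_le_add_left hay.le _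
  refine ⟨walkEnd u a, y, (gDist_le_walkWeight u a).trans ha,
    hend ▸ (gDist_le_walkWeight y b).trans hb, ?_⟩
  rw [hsplit, hend]
  gcongr
  · exact gDist_le_walkWeight u a
  · exact gDist_le_walkWeight y b

/-- `w` plays the role of `G ∪ H` and `g` that of `G`; `w ≤ g` says that `G ∪ H` contains `G`. -/
theorem hopDist_le_of_gDist_le_two_pow_mul {V : Type*} [Fintype V] {w g : V → V → ℝ≥0∞}
    (hwg : ∀ x y, w x y ≤ g x y) {c : ℝ≥0∞} (hc : 1 ≤ c) {β : ℕ} {r : ℝ≥0∞} (hr : r ≠ ⊤)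
    (hyp : ∀ x y, gDist g x y ≤ r → hopDist w β x y ≤ c * gDist g x y) (j : ℕ) (u v : V)
    (huv : gDist g u v ≤ 2 ^ j * r) :
    hopDist w (2 ^ j * (β + 1) - 1) u v ≤ c * gDist g u v := by
  induction j generalizing u v with
  | zero => simpa using hyp u v (by simpa using huv)
  | succ j ih =>
    set T := 2 ^ j * (β + 1) - 1
    have hT : 2 ^ (j + 1) * (β + 1) - 1 = T + (1 + T) := by
      have : 0 < 2 ^ j * (β + 1) := by positivity
      rw [pow_succ, mul_right_comm]; omega
    have hM : 2 ^ j * r ≠ ⊤ := ENNReal.mul_ne_top (by simp) hr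
    have huv : gDist g u v ≤ 2 ^ j * r + 2 ^ j * r := by
      rwa [pow_succ, mul_right_comm, mul_two] at huv
    by_cases hshort : gDist g u v ≤ 2 ^ j * r
    · exact (hopDist_antitone u v (by omega)).trans (ih u v hshort)
    obtain ⟨x, y, hux, hyv, hsplit⟩ :=
      exists_edge_split_of_gDist_le_add hM (not_le.mp hshort) huv
    rw [hT]
    calc hopDist w (T + (1 + T)) u v ≤ hopDist w T u x + (hopDist w 1 x y + hopDist w T y v) :=
          (hopDist_add_le _ _ u x _).trans (add_le_add_right (hopDist_add_le 1 _ x y _) _)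
      _ ≤ c * gDist g u x + (c * g x y + c * gDist g y v) := by
          gcongr
          · exact ih u x hux
          · exact ((hopDist_one_le x y).trans (hwg x y)).trans (le_mul_of_one_le_left' hc)
          · exact ih y v hyv
      _ ≤ c * gDist g u v := by
          rw [← mul_add, ← mul_add, ← add_assoc]
          gcongr

theorem hop_reduction_general (V : Type) [Fintype V] (wG wH : V → V → ℝ≥0∞)
    (ε : ℝ) (hε : 0 < ε) (β : ℕ) (p k : ℕ)
    (hyp : ∀ x y : V, gDist wG x y ≤ (2 : ℝ≥0∞) ^ p →
      hopDist (unionW wG wH) β x y ≤ ENNReal.ofReal (1 + ε) * gDist wG x y) :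
    ∀ u v : V, gDist wG u v ≤ (2 : ℝ≥0∞) ^ (k + 1) → gDist wG u v ≠ ⊤ →
      hopDist (unionW wG wH) (2 ^ (k + 1 - p) * (β + 1)) u v ≤
        ENNReal.ofReal (1 + ε) * gDist wG u v := by
  intro u v huv _
  have hscale : (2 : ℝ≥0∞) ^ (k + 1) ≤ 2 ^ (k + 1 - p) * 2 ^ p := by
    rw [← pow_add]
    exact pow_le_pow_right₀ one_le_two (by omega)
  have hc : 1 ≤ ENNReal.ofReal (1 + ε) := ENNReal.one_le_ofReal.mpr (by linarith)
  exact (hopDist_antitone u v (Nat.sub_le _ 1)).trans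
    (hopDist_le_of_gDist_le_two_pow_mul (fun _ _ => min_le_left _ _) hc (by simp) hyp
      (k + 1 - p) u v (huv.trans hscale))

/-- Hop-reduction lemma: a hopset handling distances up to `2^p` with `β` hops handles
distances up to `2^(k+1)` with `2^(k+1-p) * (β+1)` hops. -/
theorem hop_reduction (V : Type) [Fintype V] (wG wH : V → V → ℝ≥0∞)
    (hGsymm : ∀ u v, wG u v = wG v u) (hHsymm : ∀ u v, wH u v = wH v u)
    (hHpos : ∀ u v, 0 < wH u v)
    (ε : ℝ) (hε : 0 < ε) (β : ℕ) (hβ : 1 ≤ β) (p k : ℕ) (hpk : p ≤ k + 1)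
    (hyp : ∀ x y : V, gDist wG x y ≤ (2 : ℝ≥0∞) ^ p →
      hopDist (unionW wG wH) β x y ≤ ENNReal.ofReal (1 + ε) * gDist wG x y) :
    ∀ u v : V, gDist wG u v ≤ (2 : ℝ≥0∞) ^ (k + 1) → gDist wG u v ≠ ⊤ →
      hopDist (unionW wG wH) (2 ^ (k + 1 - p) * (β + 1)) u v ≤
        ENNReal.ofReal (1 + ε) * gDist wG u v :=
  hop_reduction_general V wG wH ε hε β p k hyp
end

section
/- Let ε be a real with 0<ε<1/10. Define the sequence h_0=1 and h_{i+1} = (h_i+1)·(1/ε+2) + 2i + 5 for i≥0. Then for every integer i≥0, h_i ≤ 3·(1/ε+2)^i. -/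
/-- The hopbound sequence of the hopset construction satisfies `h i ≤ 3 (1/ε + 2)^i`. -/
theorem hopbound_sequence_bound (ε : ℝ) (hε0 : 0 < ε) (hε1 : ε < 1 / 10)
    (h : ℕ → ℝ) (hh0 : h 0 = 1)
    (hhrec : ∀ i : ℕ, h (i + 1) = (h i + 1) * (1 / ε + 2) + 2 * i + 5) :
    ∀ i : ℕ, h i ≤ 3 * (1 / ε + 2) ^ i := by
  set q : ℝ := 1 / ε + 2 with hq
  have hq12 : (12 : ℝ) ≤ q := by
    have : (10 : ℝ) < 1 / ε := by
      rw [lt_div_iff₀ hε0]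
      linarith
    simp only [hq]
    linarith
  have key : ∀ i : ℕ, h i ≤ 3 * q ^ i - (i + 2) := by
    intro i
    induction i with
    | zero => norm_num [hh0]
    | succ n ih =>
      have hrec := hhrec n
      have hqpos : (0 : ℝ) < q := by linarith
      have h1 : h n + 1 ≤ 3 * q ^ n - (n + 1) := by linarith
      have h2 : (h n + 1) * q ≤ (3 * q ^ n - (n + 1)) * q :=
        mul_le_mul_of_nonneg_right h1 (le_of_lt hqpos)
      have h3 : ((n : ℝ) + 1) * 12 ≤ ((n : ℝ) + 1) * q := by
        apply mul_le_mul_of_nonneg_left hq12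
        positivity
    
      calc h (n + 1) = (h n + 1) * q + 2 * n + 5 := hrec
        _ ≤ (3 * q ^ n - (n + 1)) * q + 2 * n + 5 := by linarith
        _ = 3 * q ^ (n + 1) - ((n : ℝ) + 1) * q + 2 * n + 5 := by ring
        _ ≤ 3 * q ^ (n + 1) - ((n : ℝ) + 1) * 12 + 2 * n + 5 := by linarith
        _ ≤ 3 * q ^ (n + 1) - ((n : ℝ) + 1 + 2) := by linarith
        _ = 3 * q ^ (n + 1) - (((n + 1 : ℕ) : ℝ) + 2) := by push_cast; ring
  intro i
  have := key i
  have : (0 : ℝ) ≤ (i : ℝ) + 2 := by positivity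
  linarith [key i]
end
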